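/- Monotonicity in α of the θ-derivative of the tilting equation: for each θ ≥ 0, the map α ↦ G_θ(θ, α) is nonincreasing on (0,1) (i.e., α ≤ α' implies G_θ(θ,α) ≥ G_θ(θ,α')); and for each θ ≤ 0, the map α ↦ G_θ(θ, α) is nondecreasing on (0,1). -/

import Mathlib

open MeasureTheory

/-- The standard Gaussian density. -/
noncomputable def stdGauss (y : ℝ) : ℝ :=
  (Real.sqrt (2 * Real.pi))⁻¹ * Real.exp (-y ^ 2 / 2)

/-- Density of the two-component mixture `α*·N(θ*,1) + (1-α*)·N(-θ*,1)`. -/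
noncomputable def mixDen (θs αs y : ℝ) : ℝ :=
  αs * stdGauss (y - θs) + (1 - αs) * stdGauss (y + θs)

/-- The EM/Sinkhorn-EM map `F(θ, α)`. -/
noncomputable def Fmap (θs αs θ α : ℝ) : ℝ :=
  ∫ y, y * (α * Real.exp (θ * y) - (1 - α) * Real.exp (-(θ * y))) /
      (α * Real.exp (θ * y) + (1 - α) * Real.exp (-(θ * y))) * mixDen θs αs y

/-- The tilting equation map `G(θ, α)`. -/
noncomputable def Gmap (θs αs θ α : ℝ) : ℝ :=
  ∫ y, α * Real.exp (θ * y) /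
      (α * Real.exp (θ * y) + (1 - α) * Real.exp (-(θ * y))) * mixDen θs αs y

/-- The (normalized) `θ`-derivative of the tilting equation, `G_θ(θ, α)`. -/
noncomputable def Gtheta (θs αs θ α : ℝ) : ℝ :=
  ∫ y, y / (α * Real.exp (θ * y) + (1 - α) * Real.exp (-(θ * y))) ^ 2 * mixDen θs αs y

/-!
Write `D_α(θ, y) = α e^{θy} + (1-α) e^{-θy}`, so that `G_θ(θ, α) = ∫ y / D_α(θ, y)² dq*`.
Since `∂_α D_α(θ, y) = 2 sinh(θy)` has the sign of `y` when `θ ≥ 0`, increasing `α` enlarges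
the denominator where `y > 0` and shrinks it where `y < 0`; either way `y / D_α²` decreases
pointwise, and integrating against the nonnegative density `q*` gives the first claim.
The second follows from the symmetry `D_α(θ, y) = D_{1-α}(-θ, y)`. Integrability comes from
`D_α(θ, y) ≥ e^{-|θy|}`, which bounds the integrand by an exponential times a Gaussian.
-/

noncomputable def tiltDen (α θ y : ℝ) : ℝ :=
  α * Real.exp (θ * y) + (1 - α) * Real.exp (-(θ * y))

lemma Gtheta_eq_integral_tiltDen (θs αs θ α : ℝ) :
    Gtheta θs αs θ α = ∫ y, y / tiltDen α θ y ^ 2 * mixDen θs αs y :=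
  rfl

lemma tiltDen_one_sub_neg (α θ y : ℝ) : tiltDen (1 - α) (-θ) y = tiltDen α θ y := by
  simp only [tiltDen, neg_mul, neg_neg]
  ring

lemma Gtheta_one_sub_neg (θs αs θ α : ℝ) :
    Gtheta θs αs (-θ) (1 - α) = Gtheta θs αs θ α := by
  simp only [Gtheta_eq_integral_tiltDen, tiltDen_one_sub_neg]

lemma tiltDen_sub_tiltDen (α α' θ y : ℝ) :
    tiltDen α' θ y - tiltDen α θ y = 2 * (α' - α) * Real.sinh (θ * y) := by
  rw [tiltDen, tiltDen, Real.sinh_eq]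
  ring

lemma exp_neg_abs_le_tiltDen {α : ℝ} (hα : α ∈ Set.Icc (0 : ℝ) 1) (θ y : ℝ) :
    Real.exp (-|θ * y|) ≤ tiltDen α θ y := by
  obtain ⟨hα0, hα1⟩ := hα
  have hpos : Real.exp (-|θ * y|) ≤ Real.exp (θ * y) :=
    Real.exp_le_exp.2 (neg_abs_le _)
  have hneg : Real.exp (-|θ * y|) ≤ Real.exp (-(θ * y)) :=
    Real.exp_le_exp.2 (neg_le_neg (le_abs_self _))
  unfold tiltDen
  nlinarith

lemma tiltDen_pos {α : ℝ} (hα : α ∈ Set.Icc (0 : ℝ) 1) (θ y : ℝ) : 0 < tiltDen α θ y :=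
  (Real.exp_pos _).trans_le (exp_neg_abs_le_tiltDen hα θ y)

lemma abs_div_tiltDen_sq_le {α : ℝ} (hα : α ∈ Set.Icc (0 : ℝ) 1) (θ y : ℝ) :
    |y / tiltDen α θ y ^ 2| ≤ Real.exp ((2 * |θ| + 1) * |y|) := by
  have hD := tiltDen_pos hα θ y
  have hsq : Real.exp (-|θ * y|) ^ 2 ≤ tiltDen α θ y ^ 2 :=
    pow_le_pow_left₀ (Real.exp_pos _).le (exp_neg_abs_le_tiltDen hα θ y) 2
  have hy : |y| ≤ Real.exp |y| := by linarith [Real.add_one_le_exp |y|]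
  calc |y / tiltDen α θ y ^ 2| = |y| / tiltDen α θ y ^ 2 := by
        rw [abs_div, abs_of_pos (pow_pos hD 2)]
    _ ≤ Real.exp |y| / Real.exp (-|θ * y|) ^ 2 :=
        div_le_div₀ (Real.exp_pos _).le hy (pow_pos (Real.exp_pos _) 2) hsq
    _ = Real.exp ((2 * |θ| + 1) * |y|) := by
        rw [← Real.exp_nat_mul, ← Real.exp_sub, abs_mul]
        congr 1
        push_cast
        ring

lemma integrable_stdGauss_sub (c : ℝ) : Integrable (fun y => stdGauss (y - c)) := by
  have h := ((integrable_exp_neg_mul_sq (by norm_num : (0 : ℝ) < 1 / 2)).comp_sub_right c).const_mul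
    (Real.sqrt (2 * Real.pi))⁻¹
  refine h.congr (Filter.Eventually.of_forall fun y => ?_)
  simp only [stdGauss]
  ring_nf

lemma exp_mul_stdGauss_sub (a c y : ℝ) :
    Real.exp (a * y) * stdGauss (y - c) =
      Real.exp (a * c + a ^ 2 / 2) * stdGauss (y - (c + a)) := by
  simp only [stdGauss]
  rw [mul_left_comm, ← Real.exp_add, mul_left_comm (Real.exp _), ← Real.exp_add]
  ring_nf

lemma integrable_exp_mul_stdGauss_sub (a c : ℝ) :
    Integrable (fun y => Real.exp (a * y) * stdGauss (y - c)) := by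
  simp only [exp_mul_stdGauss_sub]
  exact (integrable_stdGauss_sub _).const_mul _

lemma integrable_exp_mul_mixDen (a θs αs : ℝ) :
    Integrable (fun y => Real.exp (a * y) * mixDen θs αs y) := by
  have h := ((integrable_exp_mul_stdGauss_sub a θs).const_mul αs).add
    ((integrable_exp_mul_stdGauss_sub a (-θs)).const_mul (1 - αs))
  refine h.congr (Filter.Eventually.of_forall fun y => ?_)
  simp only [Pi.add_apply, mixDen, sub_neg_eq_add]
  ring

lemma integrable_exp_mul_abs_mul_mixDen (a θs αs : ℝ) :
    Integrable (fun y => Real.exp (a * |y|) * mixDen θs αs y) := by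
  refine ((integrable_exp_mul_mixDen a θs αs).add (integrable_exp_mul_mixDen (-a) θs αs)).mono
    (by unfold mixDen stdGauss; fun_prop) (Filter.Eventually.of_forall fun y => ?_)
  have hpos := Real.exp_pos (a * y)
  have hneg := Real.exp_pos (-a * y)
  have hexp : Real.exp (a * |y|) ≤ Real.exp (a * y) + Real.exp (-a * y) := by
    rcases abs_choice y with hy | hy
    · rw [hy]; linarith
    · rw [hy, mul_neg, ← neg_mul]; linarith
  rw [Pi.add_apply, ← add_mul, norm_mul, norm_mul, Real.norm_of_nonneg (Real.exp_pos _).le,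
    Real.norm_of_nonneg (add_pos hpos hneg).le]
  exact mul_le_mul_of_nonneg_right hexp (norm_nonneg _)

lemma integrable_div_tiltDen_sq_mul_mixDen (θs αs θ : ℝ) {α : ℝ} (hα : α ∈ Set.Icc (0 : ℝ) 1) :
    Integrable (fun y => y / tiltDen α θ y ^ 2 * mixDen θs αs y) := by
  refine (integrable_exp_mul_abs_mul_mixDen (2 * |θ| + 1) θs αs).mono
    (by unfold tiltDen mixDen stdGauss; fun_prop) (Filter.Eventually.of_forall fun y => ?_)
  rw [norm_mul, norm_mul, Real.norm_eq_abs, Real.norm_of_nonneg (Real.exp_pos _).le]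
  exact mul_le_mul_of_nonneg_right (abs_div_tiltDen_sq_le hα θ y) (norm_nonneg _)

lemma stdGauss_nonneg (y : ℝ) : 0 ≤ stdGauss y := by
  unfold stdGauss
  positivity

lemma mixDen_nonneg (θs : ℝ) {αs : ℝ} (hαs : αs ∈ Set.Icc (0 : ℝ) 1) (y : ℝ) :
    0 ≤ mixDen θs αs y :=
  add_nonneg (mul_nonneg hαs.1 (stdGauss_nonneg _))
    (mul_nonneg (sub_nonneg.2 hαs.2) (stdGauss_nonneg _))

lemma div_tiltDen_sq_antitoneOn {θ : ℝ} (hθ : 0 ≤ θ) (y : ℝ) :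
    AntitoneOn (fun α => y / tiltDen α θ y ^ 2) (Set.Icc 0 1) := by
  intro α hα α' hα' hle
  have hD := tiltDen_pos hα θ y
  have hD' := tiltDen_pos hα' θ y
  have hdiff := tiltDen_sub_tiltDen α α' θ y
  rcases le_total 0 y with hy | hy
  · have hsinh : 0 ≤ Real.sinh (θ * y) := Real.sinh_nonneg_iff.2 (mul_nonneg hθ hy)
    have hDD : tiltDen α θ y ≤ tiltDen α' θ y := by nlinarith
    exact div_le_div_of_nonneg_left hy (pow_pos hD 2) (pow_le_pow_left₀ hD.le hDD 2)
  · have hsinh : Real.sinh (θ * y) ≤ 0 := Real.sinh_nonpos_iff.2 (mul_nonpos_of_nonneg_of_nonpos hθ hy)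
    have hDD : tiltDen α' θ y ≤ tiltDen α θ y := by nlinarith
    rw [div_le_div_iff₀ (pow_pos hD' 2) (pow_pos hD 2)]
    exact mul_le_mul_of_nonpos_left (pow_le_pow_left₀ hD'.le hDD 2) hy

lemma Gtheta_antitoneOn (θs : ℝ) {αs θ : ℝ} (hαs : αs ∈ Set.Icc (0 : ℝ) 1) (hθ : 0 ≤ θ) :
    AntitoneOn (Gtheta θs αs θ) (Set.Icc 0 1) := by
  intro α hα α' hα' hle
  simp only [Gtheta_eq_integral_tiltDen]
  refine integral_mono (integrable_div_tiltDen_sq_mul_mixDen θs αs θ hα')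
    (integrable_div_tiltDen_sq_mul_mixDen θs αs θ hα) fun y => ?_
  exact mul_le_mul_of_nonneg_right (div_tiltDen_sq_antitoneOn hθ y hα hα' hle)
    (mixDen_nonneg θs hαs y)

lemma Gtheta_monotoneOn (θs : ℝ) {αs θ : ℝ} (hαs : αs ∈ Set.Icc (0 : ℝ) 1) (hθ : θ ≤ 0) :
    MonotoneOn (Gtheta θs αs θ) (Set.Icc 0 1) := by
  intro α hα α' hα' hle
  have h1 : 1 - α' ∈ Set.Icc (0 : ℝ) 1 := ⟨by linarith [hα'.2], by linarith [hα'.1]⟩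
  have h2 : 1 - α ∈ Set.Icc (0 : ℝ) 1 := ⟨by linarith [hα.2], by linarith [hα.1]⟩
  have := Gtheta_antitoneOn θs hαs (neg_nonneg.2 hθ) h1 h2 (by linarith)
  rwa [Gtheta_one_sub_neg, Gtheta_one_sub_neg] at this

theorem Gtheta_monotonicity_in_alpha_general
    (θs αs : ℝ) (hαs : 1 / 2 < αs) (hαs1 : αs < 1) :
    (∀ θ : ℝ, 0 ≤ θ → ∀ α ∈ Set.Ioo (0 : ℝ) 1, ∀ α' ∈ Set.Ioo (0 : ℝ) 1,
      α ≤ α' → Gtheta θs αs θ α' ≤ Gtheta θs αs θ α) ∧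
    (∀ θ : ℝ, θ ≤ 0 → ∀ α ∈ Set.Ioo (0 : ℝ) 1, ∀ α' ∈ Set.Ioo (0 : ℝ) 1,
      α ≤ α' → Gtheta θs αs θ α ≤ Gtheta θs αs θ α') := by
  have hαs' : αs ∈ Set.Icc (0 : ℝ) 1 := ⟨by linarith, hαs1.le⟩
  exact ⟨fun θ hθ => (Gtheta_antitoneOn θs hαs' hθ).mono Set.Ioo_subset_Icc_self,
    fun θ hθ => (Gtheta_monotoneOn θs hαs' hθ).mono Set.Ioo_subset_Icc_self⟩

/-- monotonicity in `α` of `G_θ(θ, ·)`: it is nonincreasing on `(0,1)`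
for each `θ ≥ 0` and nondecreasing on `(0,1)` for each `θ ≤ 0`. -/
theorem Gtheta_monotonicity_in_alpha
    (θs αs : ℝ) (hθs : 0 < θs) (hαs : 1 / 2 < αs) (hαs1 : αs < 1) :
    (∀ θ : ℝ, 0 ≤ θ → ∀ α ∈ Set.Ioo (0 : ℝ) 1, ∀ α' ∈ Set.Ioo (0 : ℝ) 1,
      α ≤ α' → Gtheta θs αs θ α' ≤ Gtheta θs αs θ α) ∧
    (∀ θ : ℝ, θ ≤ 0 → ∀ α ∈ Set.Ioo (0 : ℝ) 1, ∀ α' ∈ Set.Ioo (0 : ℝ) 1,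
      α ≤ α' → Gtheta θs αs θ α ≤ Gtheta θs αs θ α') :=
  Gtheta_monotonicity_in_alpha_general θs αs hαs hαs1
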